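/- arXiv:2005.07187 — 3 statements merged into one kernel-verified Lean document; each statement's English description precedes it below -/
import Mathlib

section
/- Let P be a finite poset with n elements and let L be a labeling of P. For each i ∈ {1,…,n−1}, define the toggle τ_i on labelings of P as follows: if L⁻¹(i) <_P L⁻¹(i+1), then τ_i(L) = L; otherwise τ_i(L) is obtained from L by swapping the labels i and i+1 (i.e., τ_i(L)(x) = L(x) if L(x) ∉ {i,i+1}, τ_i(L)(x) = i+1 if L(x) = i, and τ_i(L)(x) = i if L(x) = i+1). Then ∂(L) = (τ_{n−1} ∘ ⋯ ∘ τ_2 ∘ τ_1)(L). -/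
open scoped Classical

noncomputable section

abbrev Labeling (P : Type*) [Fintype P] : Type _ := P ≃ Fin (Fintype.card P)

variable {P : Type*} [Fintype P] [PartialOrder P]

def IsLinearExt (L : Labeling P) : Prop := ∀ x y : P, x ≤ y → L x ≤ L y

def lSucc (L : Labeling P) (v : P)
    (h : (Finset.univ.filter fun y => v < y).Nonempty) : P :=
  L.symm (((Finset.univ.filter fun y => v < y).image L).min' (h.image _))

lemma lt_lSucc (L : Labeling P) (v : P)
    (h : (Finset.univ.filter fun y => v < y).Nonempty) : v < lSucc L v h := by
  have hmem := Finset.min'_mem ((Finset.univ.filter fun y => v < y).image L) (h.image _)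
  obtain ⟨y, hy, hLy⟩ := Finset.mem_image.mp hmem
  have heq : lSucc L v h = y := by
    unfold lSucc
    rw [← hLy, Equiv.symm_apply_apply]
  rw [heq]
  exact (Finset.mem_filter.mp hy).2

def promChainFrom (L : Labeling P) (v : P) : List P :=
  if h : (Finset.univ.filter fun y => v < y).Nonempty then
    v :: promChainFrom L (lSucc L v h)
  else [v]
termination_by (Finset.univ.filter fun y => v < y).card
decreasing_by
  apply Finset.card_lt_card
  refine (Finset.ssubset_iff_of_subset ?_).mpr ?_
  · intro z hz
    simp only [Finset.mem_filter, Finset.mem_univ, true_and] at *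
    exact lt_trans (lt_lSucc L v h) hz
  · exact ⟨lSucc L v h, by simp [lt_lSucc L v h], by simp⟩

def promote (L : Labeling P) : Labeling P :=
  if h : Nonempty P then
    ((List.formPerm (promChainFrom L (L.symm ⟨0, @Fintype.card_pos P _ h⟩))).trans L).trans
      (finRotate (Fintype.card P)).symm
  else L

/-- The label of `x` under `L`, as an integer in `{1, …, n}`. -/
def labelOf (L : Labeling P) (x : P) : ℕ := (L x : ℕ) + 1

/-- The largest `a ∈ {0, …, n}` such that for all `j ∈ {n−a+1, …, n}`, the set
`{x ∈ P : j ≤ L(x) ≤ n}` is an upper order ideal of `P`. -/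
def frozenA (L : Labeling P) : ℕ :=
  sSup {a : ℕ | a ≤ Fintype.card P ∧
    ∀ j, Fintype.card P - a + 1 ≤ j → j ≤ Fintype.card P →
      IsUpperSet {x : P | j ≤ labelOf L x ∧ labelOf L x ≤ Fintype.card P}}

/-- `x` is frozen with respect to `L` if `n − a + 1 ≤ L(x) ≤ n`, where `a` is as in `frozenA`. -/
def IsFrozen (L : Labeling P) (x : P) : Prop :=
  Fintype.card P - frozenA L + 1 ≤ labelOf L x

/-- A labeling of an `n`-element poset is tangled if `n ≥ 2` and `∂^{n−2}(L)` is
not a linear extension. -/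
def IsTangled (L : Labeling P) : Prop :=
  2 ≤ Fintype.card P ∧ ¬ IsLinearExt (promote^[Fintype.card P - 2] L)

/-- A labeling of an `n`-element poset is `k`-untangled if `n ≥ k + 2` and
`∂^{n−k−2}(L)` is not a linear extension. -/
def IsUntangled (k : ℕ) (L : Labeling P) : Prop :=
  k + 2 ≤ Fintype.card P ∧ ¬ IsLinearExt (promote^[Fintype.card P - k - 2] L)

/-- The comparability graph of a poset. -/
def compGraph (P : Type*) [PartialOrder P] : SimpleGraph P where
  Adj x y := x ≠ y ∧ (x ≤ y ∨ y ≤ x)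
  symm := by
    constructor
    intro x y hxy
    exact ⟨hxy.1.symm, hxy.2.symm⟩
  loopless := by
    constructor
    intro x hx
    exact hx.1 rfl

/-- The standardization of an injective map from a finite type into a linear order:
the unique relabeling by `{1, …, n}` with the same relative order of values. -/
def standardize {R β : Type*} [Fintype R] [LinearOrder β]
    (f : R → β) (hf : Function.Injective f) : R ≃ Fin (Fintype.card R) :=
  have hcard : (Finset.univ.image f).card = Fintype.card R := by
    rw [Finset.card_image_of_injective _ hf, Finset.card_univ]
  (Equiv.ofBijective (fun x => (⟨f x, by simp⟩ : ↥(Finset.univ.image f)))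
    (by
      rw [Fintype.bijective_iff_injective_and_card]
      refine ⟨fun a b hab => hf (congrArg Subtype.val hab), ?_⟩
      rw [Fintype.card_coe, hcard])).trans
    ((Finset.univ.image f).orderIsoOfFin hcard).symm.toEquiv

/-- The toggle operator `τ_{k+1}`: it swaps the labels `k+1` and `k+2` (i.e. the
`Fin`-labels `k` and `k+1`) unless `L⁻¹(k+1) <_P L⁻¹(k+2)`. -/
def toggle (L : Labeling P) (k : ℕ) : Labeling P :=
  if h : k + 1 < Fintype.card P then
    if L.symm ⟨k, Nat.lt_of_succ_lt h⟩ < L.symm ⟨k + 1, h⟩ then L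
    else L.trans (Equiv.swap ⟨k, Nat.lt_of_succ_lt h⟩ ⟨k + 1, h⟩)
  else L

/-- An element `x` is `L`-golden if every element strictly above it has a larger label. -/
def IsGolden (L : Labeling P) (x : P) : Prop := ∀ y : P, x < y → L x < L y

/-- The largest label `n` of an `n`-element poset, as an element of `Fin n`. -/
def topFin (P : Type*) [Fintype P] [Nonempty P] : Fin (Fintype.card P) :=
  ⟨Fintype.card P - 1, Nat.sub_lt Fintype.card_pos Nat.one_pos⟩

/-!
Run the toggles `τ_1, …, τ_{n-1}` in turn and follow the element `a` that carries the
(`Fin`-)label `k` just before `toggle · k`: every element above `a` has a larger label (`a` is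
golden). If `a <_P L⁻¹(k+1)`, the toggle does nothing and `L⁻¹(k+1)` is exactly the
`L`-successor of `a`, so it takes over; otherwise the toggle swaps the two labels and `a` stays
golden, now with label `k+1`. Hence the elements followed form the promotion chain: each of
them ends up with the label of the next one shifted down by one, the last one with `n - 1`,
and every other label is shifted down by one.
-/

theorem Fin.cycleIcc_succ_eq_swap {n k : ℕ} (hk : k + 1 < n) :
    Fin.cycleIcc ⟨k, by omega⟩ ⟨k + 1, hk⟩ =
      Equiv.swap ⟨k, by omega⟩ ⟨k + 1, hk⟩ := by
  have hk' : k < n := by omega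
  have : NeZero n := ⟨by omega⟩
  ext x
  rcases lt_or_ge (x : ℕ) k with hx | hx
  · rw [Fin.cycleIcc_of_lt (Fin.mk_lt_of_lt_val hx), Equiv.swap_apply_of_ne_of_ne
      (Fin.ne_of_val_ne (by simp; omega)) (Fin.ne_of_val_ne (by simp; omega))]
  rcases lt_or_ge (k + 1) (x : ℕ) with hx' | hx'
  · rw [Fin.cycleIcc_of_gt (Fin.mk_lt_of_lt_val hx'), Equiv.swap_apply_of_ne_of_ne
      (Fin.ne_of_val_ne (by simp; omega)) (Fin.ne_of_val_ne (by simp; omega))]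
  rw [Fin.cycleIcc_of_le_of_le (Fin.mk_le_of_le_val hx) (Fin.le_def.mpr hx')]
  rcases Nat.eq_or_lt_of_le hx with hx | hx
  · obtain rfl : x = ⟨k, hk'⟩ := Fin.ext hx.symm
    have hsucc : (⟨k, hk'⟩ + 1 : Fin n) = ⟨k + 1, hk⟩ := Fin.ext (Fin.val_add_one_of_lt' hk)
    simp [Fin.ext_iff, hsucc]
  · obtain rfl : x = ⟨k + 1, hk⟩ := Fin.ext (show (x : ℕ) = k + 1 by omega)
    simp

theorem Fin.swap_trans_cycleIcc_symm {n k : ℕ} (hk : k + 1 < n) {j : Fin n}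
    (hj : k + 1 ≤ (j : ℕ)) :
    (Equiv.swap ⟨k, by omega⟩ ⟨k + 1, hk⟩).trans (Fin.cycleIcc ⟨k, by omega⟩ j).symm =
      (Fin.cycleIcc ⟨k + 1, hk⟩ j).symm := by
  have : NeZero n := ⟨by omega⟩
  have htrans := Fin.cycleIcc.trans (i := ⟨k, by omega⟩) (j := ⟨k + 1, hk⟩) (k := j)
    (Fin.le_def.mpr (Nat.le_succ k)) (Fin.le_def.mpr hj)
  rw [Fin.cycleIcc_succ_eq_swap hk] at htrans
  refine Equiv.ext fun x => ?_
  rw [Equiv.trans_apply, Equiv.symm_apply_eq, ← htrans, Function.comp_apply,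
    Equiv.apply_symm_apply]

theorem Fin.cycleIcc_zero_eq_finRotate {n : ℕ} (hn : 0 < n) :
    Fin.cycleIcc ⟨0, hn⟩ ⟨n - 1, by omega⟩ = finRotate n := by
  obtain ⟨m, rfl⟩ : ∃ m, n = m + 1 := ⟨n - 1, by omega⟩
  exact (Fin.cycleIcc_zero_eq_cycleRange (Fin.last m)).trans (Fin.cycleRange_last m)

theorem lSucc_le (L : Labeling P) {v y : P} (h : (Finset.univ.filter fun y => v < y).Nonempty)
    (hy : v < y) : L (lSucc L v h) ≤ L y := by
  rw [lSucc, Equiv.apply_symm_apply]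
  exact Finset.min'_le _ _ (Finset.mem_image_of_mem _ (by simpa using hy))

theorem lSucc_eq_of_forall_le {L : Labeling P} {v w : P}
    (h : (Finset.univ.filter fun y => v < y).Nonempty) (hvw : v < w)
    (hw : ∀ y, v < y → L w ≤ L y) : lSucc L v h = w :=
  L.injective (le_antisymm (lSucc_le L h hvw) (hw _ (lt_lSucc L v h)))

theorem lSucc_congr {L L' : Labeling P} {v : P}
    (h : (Finset.univ.filter fun y => v < y).Nonempty) (hLL' : ∀ y, v < y → L y = L' y) :
    lSucc L v h = lSucc L' v h :=
  lSucc_eq_of_forall_le h (lt_lSucc L' v h) fun y hy => by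
    rw [hLL' _ (lt_lSucc L' v h), hLL' y hy]
    exact lSucc_le L' h hy

theorem promChainFrom_of_nonempty (L : Labeling P) {v : P}
    (h : (Finset.univ.filter fun y => v < y).Nonempty) :
    promChainFrom L v = v :: promChainFrom L (lSucc L v h) := by
  rw [promChainFrom, dif_pos h]

theorem promChainFrom_of_forall_not_lt (L : Labeling P) {v : P} (h : ∀ y, ¬ v < y) :
    promChainFrom L v = [v] := by
  rw [promChainFrom, dif_neg]
  simpa [Finset.filter_nonempty_iff] using h

theorem promChainFrom_congr {L L' : Labeling P} {v : P} (hLL' : ∀ y, v < y → L y = L' y) :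
    promChainFrom L v = promChainFrom L' v := by
  induction v using promChainFrom.induct L with
  | case1 v h ih =>
    rw [promChainFrom_of_nonempty L h, promChainFrom_of_nonempty L' h, ← lSucc_congr h hLL',
      ih fun y hy => hLL' y ((lt_lSucc L v h).trans hy)]
  | case2 v h =>
    rw [promChainFrom, promChainFrom, dif_neg h, dif_neg h]

theorem promChainFrom_eq_cons (L : Labeling P) (v : P) : ∃ t, promChainFrom L v = v :: t := by
  rw [promChainFrom]
  split <;> exact ⟨_, rfl⟩

section Golden

variable {M : Labeling P} {a w : P} {k : ℕ}

theorem IsGolden.succ_lt_of_ne {y : P} (hk : k + 1 < Fintype.card P) (hgold : IsGolden M a)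
    (ha : M a = ⟨k, by omega⟩) (hw : M w = ⟨k + 1, hk⟩) (hay : a < y) (hyw : y ≠ w) :
    k + 1 < M y := by
  have hky : k < M y := by simpa [ha, Fin.lt_def] using hgold y hay
  have hne : (M y : ℕ) ≠ k + 1 := fun h => hyw (M.injective (Fin.ext (by rw [h, hw])))
  omega

theorem IsGolden.lSucc_eq (hk : k + 1 < Fintype.card P) (hgold : IsGolden M a)
    (ha : M a = ⟨k, by omega⟩) (hw : M w = ⟨k + 1, hk⟩) (haw : a < w)
    (h : (Finset.univ.filter fun y => a < y).Nonempty) :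
    lSucc M a h = w :=
  lSucc_eq_of_forall_le h haw fun y hay => by
    rcases eq_or_ne y w with rfl | hyw
    · exact le_rfl
    · rw [Fin.le_def, hw]
      exact (hgold.succ_lt_of_ne hk ha hw hay hyw).le

theorem IsGolden.of_lt (hk : k + 1 < Fintype.card P) (hgold : IsGolden M a)
    (ha : M a = ⟨k, by omega⟩) (hw : M w = ⟨k + 1, hk⟩) (haw : a < w) : IsGolden M w := by
  intro y hwy
  rw [Fin.lt_def, hw]
  exact hgold.succ_lt_of_ne hk ha hw (haw.trans hwy) hwy.ne'

theorem IsGolden.trans_swap_apply_of_lt {y : P} (hk : k + 1 < Fintype.card P)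
    (hgold : IsGolden M a) (ha : M a = ⟨k, by omega⟩) (hw : M w = ⟨k + 1, hk⟩)
    (haw : ¬ a < w) (hay : a < y) : M.trans (Equiv.swap ⟨k, by omega⟩ ⟨k + 1, hk⟩) y = M y := by
  have hlt := hgold.succ_lt_of_ne hk ha hw hay (by rintro rfl; exact haw hay)
  exact Equiv.swap_apply_of_ne_of_ne (Fin.ne_of_val_ne (by simp; omega))
    (Fin.ne_of_val_ne (by simp; omega))

theorem IsGolden.trans_swap (hk : k + 1 < Fintype.card P) (hgold : IsGolden M a)
    (ha : M a = ⟨k, by omega⟩) (hw : M w = ⟨k + 1, hk⟩) (haw : ¬ a < w) :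
    IsGolden (M.trans (Equiv.swap ⟨k, by omega⟩ ⟨k + 1, hk⟩)) a := fun y hay => by
  rw [hgold.trans_swap_apply_of_lt hk ha hw haw hay, Equiv.trans_apply, ha,
    Equiv.swap_apply_left, Fin.lt_def]
  exact hgold.succ_lt_of_ne hk ha hw hay (by rintro rfl; exact haw hay)

end Golden

theorem foldl_toggle_range'_of_isGolden [Nonempty P] {M : Labeling P} {a : P} {k : ℕ}
    (hk : k < Fintype.card P) (ha : M a = ⟨k, hk⟩) (hgold : IsGolden M a) :
    (List.range' k (Fintype.card P - 1 - k)).foldl toggle M =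
      ((List.formPerm (promChainFrom M a)).trans M).trans
        (Fin.cycleIcc ⟨k, hk⟩ (topFin P)).symm := by
  induction hd : Fintype.card P - 1 - k generalizing M a k with
  | zero =>
    have hmax : ∀ y, ¬ a < y := fun y hay => by
      have := (M y).isLt
      have : k < M y := by simpa [ha, Fin.lt_def] using hgold y hay
      omega
    rw [List.range'_zero, List.foldl_nil, promChainFrom_of_forall_not_lt M hmax,
      List.formPerm_singleton,
      show (⟨k, hk⟩ : Fin _) = topFin P from Fin.ext (by simp [topFin]; omega), Fin.cycleIcc_eq]
    rfl
  | succ d ih =>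
    have hk1 : k + 1 < Fintype.card P := by omega
    obtain ⟨w, hw⟩ : ∃ w, M w = ⟨k + 1, hk1⟩ := ⟨M.symm _, M.apply_symm_apply _⟩
    have hsymm_a : M.symm ⟨k, hk⟩ = a := M.symm_apply_eq.mpr ha.symm
    have hsymm_w : M.symm ⟨k + 1, hk1⟩ = w := M.symm_apply_eq.mpr hw.symm
    rw [List.range'_succ, List.foldl_cons, toggle, dif_pos hk1, hsymm_a, hsymm_w]
    split_ifs with haw
    · have hne : (Finset.univ.filter fun y => a < y).Nonempty := ⟨w, by simpa using haw⟩
      obtain ⟨t, ht⟩ := promChainFrom_eq_cons M w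
      rw [ih hk1 hw (hgold.of_lt hk1 ha hw haw) (by omega), promChainFrom_of_nonempty M hne,
        hgold.lSucc_eq hk1 ha hw haw hne, ht, List.formPerm_cons_cons,
        ← Fin.swap_trans_cycleIcc_symm hk1 (j := topFin P) (by simp [topFin]; omega)]
      refine Equiv.ext fun x => ?_
      simp only [Equiv.trans_apply, Equiv.Perm.mul_apply, M.injective.map_swap, ha, hw]
    · have ha' : M.trans (Equiv.swap ⟨k, hk⟩ ⟨k + 1, hk1⟩) a = ⟨k + 1, hk1⟩ := by
        rw [Equiv.trans_apply, ha, Equiv.swap_apply_left]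
      rw [ih hk1 ha' (hgold.trans_swap hk1 ha hw haw) (by omega),
        promChainFrom_congr fun y hay => hgold.trans_swap_apply_of_lt hk1 ha hw haw hay,
        ← Fin.swap_trans_cycleIcc_symm hk1 (j := topFin P) (by simp [topFin]; omega)]
      refine Equiv.ext fun x => ?_
      simp only [Equiv.trans_apply, Equiv.swap_apply_self]

/-- Extended promotion equals the composite of the toggles
`τ_{n-1} ∘ ⋯ ∘ τ_2 ∘ τ_1` (here `toggle L k` is the paper's `τ_{k+1}`, acting on
the `Fin`-labels `k` and `k+1`, i.e. the paper's labels `k+1` and `k+2`). -/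
theorem promotion_eq_toggle_composition (L : Labeling P) :
    promote L = (List.range (Fintype.card P - 1)).foldl toggle L := by
  rcases isEmpty_or_nonempty P with hP | hP
  · rw [promote, dif_neg (not_nonempty_iff.mpr hP), Fintype.card_eq_zero]
    rfl
  have hn : 0 < Fintype.card P := Fintype.card_pos
  have hgold : IsGolden L (L.symm ⟨0, hn⟩) := fun y hy => by
    rw [L.apply_symm_apply, Fin.lt_def]
    exact Nat.pos_of_ne_zero fun h => hy.ne' (L.eq_symm_apply.mpr (Fin.ext h))
  rw [promote, dif_pos hP, List.range_eq_range', ← Nat.sub_zero (Fintype.card P - 1),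
    foldl_toggle_range'_of_isGolden hn (L.apply_symm_apply _) hgold,
    ← Fin.cycleIcc_zero_eq_finRotate hn]
  rfl

end
end

section
/- For every n-element poset P, the image of the set Λ(P) of all labelings of P under the (n−1)-fold iterate of extended promotion equals the set of linear extensions of P: that is, ∂^{n−1}(L) is a linear extension for every labeling L of P, and every linear extension of P equals ∂^{n−1}(L) for some labeling L of P. -/
/-!
Write `σ` for the cyclic permutation of the promotion chain `v₁ < ⋯ < vₘ` of `L`, so
that `∂L(x) = L(σ x) - 1` for `x ≠ vₘ` and `∂L(vₘ) = n`. Since `σ x` is `x` off the chain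
and the `L`-successor of `x` on it, if the elements of `L`-label `> j` form an up-set then
so do the elements of `∂L`-label `≥ j`. After `k` promotions every threshold `≥ n + 1 - k` gives
an up-set, so `∂^{n-1} L` is a linear extension, and `∂` maps linear extensions to linear
extensions.

Demotion is promotion in the dual poset with reversed labels. For a linear extension `L`, the
demotion chain of `∂L` is `vₘ > ⋯ > v₁`, and demotion undoes `∂`. So `∂` is injective on
the finite set of linear extensions, hence permutes it, and so does `∂^{n-1}`.
-/

open scoped Classical

noncomputable section

variable {P : Type*} [Fintype P] [PartialOrder P]

theorem List.IsChain.rel_formPerm {α : Type*} [DecidableEq α] {R : α → α → Prop}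
    {l : List α} (hc : l.IsChain R) (hnd : l.Nodup) {x : α} (hx : x ∈ l)
    (hlast : x ≠ l.getLast (List.ne_nil_of_mem hx)) : R x (l.formPerm x) := by
  obtain ⟨i, hi, rfl⟩ := List.getElem_of_mem hx
  have hi' : i + 1 < l.length := by
    by_contra h
    exact hlast (by rw [List.getLast_eq_getElem]; congr 1; omega)
  rw [List.formPerm_apply_lt_getElem _ hnd i hi']
  exact List.isChain_iff_getElem.mp hc i hi'

theorem List.formPerm_map_apply {α β : Type*} [DecidableEq α] [DecidableEq β] (e : α ≃ β)
    (l : List α) (x : α) : (l.map e).formPerm (e x) = e (l.formPerm x) := by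
  induction l with
  | nil => rfl
  | cons a l ih =>
    cases l with
    | nil => rfl
    | cons b l =>
      simp only [List.map_cons, List.formPerm_cons_cons, Equiv.Perm.mul_apply] at ih ⊢
      rw [ih, e.injective.swap_apply]

theorem rev_finRotate_symm_rev {n : ℕ} (i : Fin n) :
    ((finRotate n).symm i.rev).rev = finRotate n i := by
  rw [finRotate_symm_apply, Fin.rev_sub, Fin.rev_rev, finRotate_apply]

theorem val_finRotate_symm_zero {n : ℕ} (h : 0 < n) :
    ((finRotate n).symm ⟨0, h⟩ : ℕ) = n - 1 := by
  obtain ⟨m, rfl⟩ := Nat.exists_eq_succ_of_ne_zero h.ne'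
  simp [Fin.coe_neg_one]

def IsLSucc (L : Labeling P) (a b : P) : Prop := a < b ∧ ∀ y, a < y → L b ≤ L y

theorem IsLSucc.unique {L : Labeling P} {a b c : P} (hb : IsLSucc L a b) (hc : IsLSucc L a c) :
    b = c :=
  L.injective (le_antisymm (hb.2 c hc.1) (hc.2 b hb.1))

theorem univ_filter_lt_nonempty_iff {v : P} :
    (Finset.univ.filter fun y => v < y).Nonempty ↔ ¬ IsMax v := by
  simp [Finset.filter_nonempty_iff, not_isMax_iff]

theorem isLSucc_lSucc (L : Labeling P) (v : P)
    (h : (Finset.univ.filter fun y => v < y).Nonempty) : IsLSucc L v (lSucc L v h) := by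
  refine ⟨lt_lSucc L v h, fun y hy => ?_⟩
  rw [lSucc, Equiv.apply_symm_apply]
  exact Finset.min'_le _ _ (Finset.mem_image_of_mem L (by simp [hy]))

theorem promChainFrom_of_isMax (L : Labeling P) {v : P} (hv : IsMax v) :
    promChainFrom L v = [v] := by
  rw [promChainFrom, dif_neg (univ_filter_lt_nonempty_iff.not_left.mpr hv)]

theorem promChainFrom_of_isLSucc (L : Labeling P) {v w : P} (hw : IsLSucc L v w) :
    promChainFrom L v = v :: promChainFrom L w := by
  have h : (Finset.univ.filter fun y => v < y).Nonempty :=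
    univ_filter_lt_nonempty_iff.mpr hw.1.not_isMax
  rw [promChainFrom, dif_pos h, (isLSucc_lSucc L v h).unique hw]

theorem exists_promChainFrom_eq_cons (L : Labeling P) (v : P) :
    ∃ t, promChainFrom L v = v :: t ∧ (v :: t).IsChain (IsLSucc L) ∧
      IsMax ((v :: t).getLast (List.cons_ne_nil v t)) := by
  induction v using promChainFrom.induct (L := L) with
  | case1 v h ih =>
    obtain ⟨t, ht, hc, hm⟩ := ih
    refine ⟨_ :: t, by rw [promChainFrom_of_isLSucc L (isLSucc_lSucc L v h), ht], ?_, ?_⟩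
    · exact hc.cons (fun b hb => by cases hb; exact isLSucc_lSucc L v h)
    · simpa [List.getLast_cons] using hm
  | case2 v h =>
    have hv : IsMax v := not_not.mp (univ_filter_lt_nonempty_iff.not.mp h)
    exact ⟨[], promChainFrom_of_isMax L hv, .singleton _, hv⟩

theorem promChainFrom_head_eq_of_isChain (L : Labeling P) {l : List P} (hl : l ≠ [])
    (hc : l.IsChain (IsLSucc L)) (hm : IsMax (l.getLast hl)) :
    promChainFrom L (l.head hl) = l := by
  induction l with
  | nil => exact absurd rfl hl
  | cons a t ih =>
    cases t with
    | nil => exact promChainFrom_of_isMax L hm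
    | cons b t =>
      rw [List.head_cons, promChainFrom_of_isLSucc L (List.rel_of_isChain_cons_cons hc),
        ← ih (List.cons_ne_nil b t) hc.tail (by simpa [List.getLast_cons] using hm),
        List.head_cons]

section PromChain

variable [Nonempty P]

def promChain (L : Labeling P) : List P :=
  promChainFrom L (L.symm ⟨0, Fintype.card_pos⟩)

variable (L : Labeling P)

theorem promChain_ne_nil : promChain L ≠ [] := by
  obtain ⟨t, ht, -⟩ := exists_promChainFrom_eq_cons L (L.symm ⟨0, Fintype.card_pos⟩)
  rw [promChain, ht]
  exact List.cons_ne_nil _ _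

theorem head_promChain :
    (promChain L).head (promChain_ne_nil L) = L.symm ⟨0, Fintype.card_pos⟩ := by
  obtain ⟨t, ht, -⟩ := exists_promChainFrom_eq_cons L (L.symm ⟨0, Fintype.card_pos⟩)
  simp only [promChain, ht, List.head_cons]

theorem isChain_promChain : (promChain L).IsChain (IsLSucc L) := by
  obtain ⟨t, ht, hc, -⟩ := exists_promChainFrom_eq_cons L (L.symm ⟨0, Fintype.card_pos⟩)
  rwa [promChain, ht]

theorem isMax_getLast_promChain : IsMax ((promChain L).getLast (promChain_ne_nil L)) := by
  obtain ⟨t, ht, -, hm⟩ := exists_promChainFrom_eq_cons L (L.symm ⟨0, Fintype.card_pos⟩)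
  simp only [promChain, ht, hm]

theorem nodup_promChain : (promChain L).Nodup :=
  (List.isChain_iff_pairwise.mp ((isChain_promChain L).imp fun _ _ h => h.1)).imp ne_of_lt

theorem formPerm_promChain_getLast :
    (promChain L).formPerm ((promChain L).getLast (promChain_ne_nil L)) =
      L.symm ⟨0, Fintype.card_pos⟩ := by
  obtain ⟨t, ht, -⟩ := exists_promChainFrom_eq_cons L (L.symm ⟨0, Fintype.card_pos⟩)
  simp only [promChain, ht, List.formPerm_apply_getLast]

variable {L}

theorem ne_getLast_promChain_of_lt {x y : P} (h : x < y) :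
    x ≠ (promChain L).getLast (promChain_ne_nil L) :=
  fun hx => (isMax_getLast_promChain L).not_lt (hx ▸ h)

theorem isLSucc_formPerm_promChain {x : P} (hx : x ∈ promChain L)
    (hlast : x ≠ (promChain L).getLast (promChain_ne_nil L)) :
    IsLSucc L x ((promChain L).formPerm x) :=
  (isChain_promChain L).rel_formPerm (nodup_promChain L) hx hlast

theorem le_formPerm_promChain {x : P}
    (hlast : x ≠ (promChain L).getLast (promChain_ne_nil L)) :
    x ≤ (promChain L).formPerm x := by
  by_cases hx : x ∈ promChain L
  · exact (isLSucc_formPerm_promChain hx hlast).1.le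
  · rw [List.formPerm_apply_of_notMem hx]

variable (L)

theorem promote_apply (x : P) :
    promote L x = (finRotate _).symm (L ((promChain L).formPerm x)) := by
  rw [promote, dif_pos ‹_›]
  rfl

theorem val_promote_getLast :
    (promote L ((promChain L).getLast (promChain_ne_nil L)) : ℕ) = Fintype.card P - 1 := by
  rw [promote_apply, formPerm_promChain_getLast, Equiv.apply_symm_apply, val_finRotate_symm_zero]

theorem val_promote_add_one {x : P} (hx : x ≠ (promChain L).getLast (promChain_ne_nil L)) :
    (promote L x : ℕ) + 1 = L ((promChain L).formPerm x) := by
  have h0 : L ((promChain L).formPerm x) ≠ 0 := fun h =>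
    hx <| (promChain L).formPerm.injective <| by
      rw [formPerm_promChain_getLast, Equiv.eq_symm_apply, h]
      rfl
  rw [promote_apply, coe_finRotate_symm_of_ne_zero h0]
  have := Fin.pos_iff_ne_zero.mpr h0
  omega

end PromChain

theorem IsLinearExt.isUpperSet {L : Labeling P} (hL : IsLinearExt L) (j : ℕ) :
    IsUpperSet {x | j ≤ (L x : ℕ)} :=
  fun x y hxy (hx : j ≤ (L x : ℕ)) => show j ≤ (L y : ℕ) from hx.trans (hL x y hxy)

theorem isLinearExt_of_isUpperSet {L : Labeling P}
    (h : ∀ j, 1 ≤ j → IsUpperSet {x | j ≤ (L x : ℕ)}) : IsLinearExt L := by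
  intro x y hxy
  rcases Nat.eq_zero_or_pos (L x : ℕ) with h0 | hpos
  · exact Fin.le_def.mpr (h0 ▸ Nat.zero_le _)
  · exact Fin.le_def.mpr (h (L x) hpos hxy (show (L x : ℕ) ≤ L x from le_rfl))

theorem isUpperSet_promote {L : Labeling P} {j : ℕ}
    (hU : IsUpperSet {x | j + 1 ≤ (L x : ℕ)}) : IsUpperSet {x | j ≤ (promote L x : ℕ)} := by
  cases isEmpty_or_nonempty P
  · exact fun x => isEmptyElim x
  intro x y hxy (hx : j ≤ (promote L x : ℕ))
  show j ≤ (promote L y : ℕ)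
  rcases hxy.eq_or_lt with rfl | hlt
  · exact hx
  have hx_last := ne_getLast_promChain_of_lt (L := L) hlt
  by_cases hy_last : y = (promChain L).getLast (promChain_ne_nil L)
  · rw [hy_last, val_promote_getLast]
    have := (promote L x).isLt
    omega
  have hσx : j + 1 ≤ (L ((promChain L).formPerm x) : ℕ) := by
    rw [← val_promote_add_one L hx_last]
    exact Nat.succ_le_succ hx
  have hy : j + 1 ≤ (L y : ℕ) := by
    by_cases hx_mem : x ∈ promChain L
    · exact hσx.trans ((isLSucc_formPerm_promChain hx_mem hx_last).2 y hlt)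
    · rw [List.formPerm_apply_of_notMem hx_mem] at hσx
      exact hU hlt.le hσx
  have hσy : j + 1 ≤ (L ((promChain L).formPerm y) : ℕ) :=
    hU (le_formPerm_promChain hy_last) hy
  have := val_promote_add_one L hy_last
  omega

theorem isLinearExt_promote {L : Labeling P} (hL : IsLinearExt L) : IsLinearExt (promote L) :=
  isLinearExt_of_isUpperSet fun j _ => isUpperSet_promote (hL.isUpperSet (j + 1))

theorem isUpperSet_promote_iterate (L : Labeling P) {j k : ℕ} (hjk : Fintype.card P ≤ j + k) :
    IsUpperSet {x | j ≤ (promote^[k] L x : ℕ)} := by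
  induction k generalizing j with
  | zero =>
    intro x _ _ (hx : j ≤ (L x : ℕ))
    have := (L x).isLt
    omega
  | succ k ih =>
    rw [Function.iterate_succ']
    exact isUpperSet_promote (ih (by omega))

theorem isLinearExt_promote_iterate (L : Labeling P) :
    IsLinearExt (promote^[Fintype.card P - 1] L) :=
  isLinearExt_of_isUpperSet fun _ hj => isUpperSet_promote_iterate L (by omega)

def Labeling.dual {α : Type*} [Fintype α] (L : Labeling α) : Labeling αᵒᵈ :=
  (OrderDual.ofDual.trans L).trans Fin.revPerm

theorem Labeling.dual_toDual {α : Type*} [Fintype α] (L : Labeling α) (x : α) :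
    L.dual (OrderDual.toDual x) = (L x).rev :=
  rfl

def demote (L : Labeling P) : Labeling P :=
  (promote L.dual).dual

section Demotion

variable [Nonempty P] {L : Labeling P}

theorem demote_apply (M : Labeling P) (x : P) :
    demote M x = finRotate _
      (M (OrderDual.ofDual ((promChain M.dual).formPerm (OrderDual.toDual x)))) := by
  change (promote M.dual (OrderDual.toDual x)).rev = _
  rw [promote_apply]
  exact rev_finRotate_symm_rev _

theorem isLSucc_dual_promote (hL : IsLinearExt L) {a b : P} (ha : a ∈ promChain L)
    (hab : IsLSucc L a b) :
    IsLSucc (promote L).dual (OrderDual.toDual b) (OrderDual.toDual a) := by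
  have hσa : (promChain L).formPerm a = b :=
    (isLSucc_formPerm_promChain ha (ne_getLast_promChain_of_lt hab.1)).unique hab
  refine ⟨hab.1, fun y' hy => ?_⟩
  obtain ⟨y, rfl⟩ := OrderDual.toDual.surjective y'
  replace hy : y < b := hy
  have hσy : L ((promChain L).formPerm y) ≤ L b := by
    by_cases hy_mem : y ∈ promChain L
    · exact (isLSucc_formPerm_promChain hy_mem (ne_getLast_promChain_of_lt hy)).2 b hy
    · rw [List.formPerm_apply_of_notMem hy_mem]
      exact hL y b hy.le
  have h1 := val_promote_add_one L (ne_getLast_promChain_of_lt hab.1)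
  have h2 := val_promote_add_one L (ne_getLast_promChain_of_lt hy)
  rw [hσa] at h1
  rw [Fin.le_def] at hσy
  refine Fin.rev_le_rev.mpr (Fin.le_def.mpr ?_)
  show (promote L y : ℕ) ≤ promote L a
  omega

theorem promChain_dual_promote (hL : IsLinearExt L) :
    promChain (promote L).dual = ((promChain L).map OrderDual.toDual).reverse := by
  have hne : ((promChain L).map OrderDual.toDual).reverse ≠ [] := by
    simp [promChain_ne_nil]
  have hhead : ((promChain L).map OrderDual.toDual).reverse.head hne =
      (promote L).dual.symm ⟨0, Fintype.card_pos⟩ := by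
    rw [Equiv.eq_symm_apply, List.head_reverse, List.getLast_map, Labeling.dual_toDual]
    ext
    simp only [Fin.val_rev, val_promote_getLast]
    have := Fintype.card_pos (α := P)
    omega
  rw [promChain, ← hhead]
  apply promChainFrom_head_eq_of_isChain
  · rw [List.isChain_reverse, List.isChain_map]
    exact (isChain_promChain L).imp_of_mem_imp fun a b ha _ hab => isLSucc_dual_promote hL ha hab
  · rw [List.getLast_reverse, List.head_map, isMax_toDual_iff, head_promChain]
    intro b hb
    have h := Fin.le_def.mp (hL _ _ hb)
    rw [Equiv.apply_symm_apply] at h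
    exact (L.eq_symm_apply.mpr (Fin.ext (Nat.le_zero.mp h))).ge

theorem demote_promote (hL : IsLinearExt L) : demote (promote L) = L := by
  refine Equiv.ext fun x => ?_
  have hσ : ((promChain L).map OrderDual.toDual).formPerm⁻¹ (OrderDual.toDual x) =
      OrderDual.toDual ((promChain L).formPerm⁻¹ x) := by
    rw [Equiv.Perm.inv_eq_iff_eq, List.formPerm_map_apply, Equiv.Perm.inv_def,
      Equiv.apply_symm_apply]
  rw [demote_apply, promChain_dual_promote hL, List.formPerm_reverse, hσ,
    OrderDual.ofDual_toDual, promote_apply, Equiv.Perm.inv_def, Equiv.apply_symm_apply,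
    Equiv.apply_symm_apply]

end Demotion

theorem leftInvOn_demote_promote :
    Set.LeftInvOn demote promote {L : Labeling P | IsLinearExt L} := by
  cases isEmpty_or_nonempty P
  · exact fun _ _ => Equiv.ext fun x => isEmptyElim x
  · exact fun _ hL => demote_promote hL

theorem bijOn_promote : Set.BijOn promote {L : Labeling P | IsLinearExt L} {L | IsLinearExt L} :=
  ((Set.toFinite _).injOn_iff_bijOn_of_mapsTo fun _ => isLinearExt_promote).mp
    leftInvOn_demote_promote.injOn

/-- `∂^{n−1}(Λ(P)) = ℒ(P)`: the `(n−1)`-st iterate of extended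
promotion of any labeling is a linear extension, and every linear extension
arises this way. -/
theorem promote_iterate_image_eq_linearExt :
    (∀ L : Labeling P, IsLinearExt (promote^[Fintype.card P - 1] L)) ∧
      (∀ L' : Labeling P, IsLinearExt L' →
        ∃ L : Labeling P, promote^[Fintype.card P - 1] L = L') := by
  refine ⟨isLinearExt_promote_iterate, fun L' hL' => ?_⟩
  obtain ⟨L, -, hL⟩ := bijOn_promote.surjOn.iterate _ hL'
  exact ⟨L, hL⟩

end
end

section
/- Let P be an n-element poset with n ≥ 2 whose connected components P_1, …, P_r each have a unique minimal element. Then the number of tangled labelings of P is (n − r) · (n − 2)!. -/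
open scoped Classical

noncomputable section

variable {P : Type*} [Fintype P] [PartialOrder P]

/-!
Passing from `L` to `∂L`, the element that receives label `j < n` is either `L⁻¹(j + 1)` or its
predecessor `p` on the promotion chain; in the second case `p < L⁻¹(j + 1)` and every element
above `p` has `L`-label at least `j + 1`. (Labels are `1, …, n` here; in the code they are
`Fin n`, so `L⁻¹(n)` is `L.symm ⟨n - 1, _⟩`.) Two consequences drive the argument.

First, after `t` promotions the labels above `n - t` are frozen: each set of the form
`{x | j ≤ ∂ᵗL(x)}` with `j > n - t` is an up-set. So `∂ⁿ⁻²L` fails to be a linear extension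
exactly when `w = (∂ⁿ⁻²L)⁻¹(2)` lies strictly below `u = (∂ⁿ⁻²L)⁻¹(1)`, and then `w` is minimal.

Second, the element labelled `j` after `t` steps lies weakly below the one labelled `j + t`
before. Tracing `w` backwards, the predecessor case can never occur, since the ancestors of `u`
lie above `w` with smaller labels; hence `w = L⁻¹(n)`. Conversely, the least element of a
component is never replaced. So `L` is tangled iff `L⁻¹(n)` is the least element of its
component and lies below `L⁻¹(n - 1)`. Such labelings are counted by choosing the non-least
element `L⁻¹(n - 1)` (`n - r` ways), which determines `L⁻¹(n)`, and labelling the remaining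
`n - 2` elements arbitrarily.
-/

section PinnedEquiv

variable {γ δ : Type*} [DecidableEq γ] [DecidableEq δ]

def equivRestrictCompl (c : γ) (d : δ) :
    {f : γ ≃ δ // f c = d} ≃ ({y // y ≠ c} ≃ {j // j ≠ d}) :=
  (Equiv.subtypeEquiv ((Equiv.optionSubtypeNe c).symm.equivCongr (Equiv.refl δ))
    (by simp)).trans (Equiv.optionSubtype d)

lemma coe_equivRestrictCompl_apply (c : γ) (d : δ) (f : {f : γ ≃ δ // f c = d})
    (y : {y // y ≠ c}) :
    (equivRestrictCompl c d f y : δ) = f.1 y := by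
  simp [equivRestrictCompl]

variable [Fintype γ] [Fintype δ]

lemma card_equiv_apply_eq (h : Fintype.card γ = Fintype.card δ) (c : γ) (d : δ) :
    Fintype.card {f : γ ≃ δ // f c = d} = (Fintype.card γ - 1).factorial := by
  have hc : Fintype.card {y // y ≠ c} = Fintype.card γ - 1 := by simp
  have hd : Fintype.card {j // j ≠ d} = Fintype.card δ - 1 := by simp
  rw [Fintype.card_congr (equivRestrictCompl c d),
    Fintype.card_equiv (Fintype.equivOfCardEq (by rw [hc, hd, h])), hc]

lemma card_equiv_apply_eq_and_apply_eq (h : Fintype.card γ = Fintype.card δ)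
    {c c' : γ} (hc : c' ≠ c) {d d' : δ} (hd : d' ≠ d) :
    Fintype.card {f : γ ≃ δ // f c = d ∧ f c' = d'} = (Fintype.card γ - 2).factorial := by
  have e : {f : γ ≃ δ // f c = d ∧ f c' = d'} ≃
      {g : {y // y ≠ c} ≃ {j // j ≠ d} // g ⟨c', hc⟩ = ⟨d', hd⟩} :=
    (Equiv.subtypeSubtypeEquivSubtypeInter _ _).symm.trans
      (Equiv.subtypeEquiv (equivRestrictCompl c d)
        (fun f => by simp [Subtype.ext_iff, coe_equivRestrictCompl_apply]))
  rw [Fintype.card_congr e, card_equiv_apply_eq (by simp [h]), Fintype.card_subtype_compl,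
    Fintype.card_subtype_eq, Nat.sub_sub]

lemma card_equiv_symm_pred_and_apply_eq (h : Fintype.card γ = Fintype.card δ) {d d' : δ}
    (hd : d' ≠ d) (Q : γ → Prop) (g : γ → γ) (hg : ∀ z, Q z → z ≠ g z) :
    Nat.card {f : γ ≃ δ // Q (f.symm d') ∧ f (g (f.symm d')) = d} =
      Nat.card {z // Q z} * (Fintype.card γ - 2).factorial := by
  let e : {f : γ ≃ δ // Q (f.symm d') ∧ f (g (f.symm d')) = d} ≃
      Σ z : {z // Q z}, {f : γ ≃ δ // f (g z) = d ∧ f z = d'} :=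
    { toFun := fun f => ⟨⟨f.1.symm d', f.2.1⟩, f.1, f.2.2, f.1.apply_symm_apply d'⟩
      invFun := fun x => ⟨x.2.1, by
        rw [x.2.1.symm_apply_eq.mpr x.2.2.2.symm]
        exact ⟨x.1.2, x.2.2.1⟩⟩
      left_inv := fun _ => rfl
      right_inv := by
        rintro ⟨⟨z, hz⟩, f, hf, hfz⟩
        obtain rfl : f.symm d' = z := f.symm_apply_eq.mpr hfz.symm
        rfl }
  rw [Nat.card_congr e, Nat.card_sigma, Finset.sum_congr rfl fun z _ => by
    rw [Nat.card_eq_fintype_card, card_equiv_apply_eq_and_apply_eq h (hg z.1 z.2) hd],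
    Finset.sum_const, Finset.card_univ, smul_eq_mul, Nat.card_eq_fintype_card]

end PinnedEquiv

section Components

variable {α : Type*} [PartialOrder α]

def IsLeastInComponent (m : α) : Prop := ∀ q, (compGraph α).Reachable m q → m ≤ q

lemma reachable_of_le {a b : α} (h : a ≤ b) : (compGraph α).Reachable a b := by
  rcases eq_or_ne a b with rfl | hne
  · rfl
  · exact SimpleGraph.Adj.reachable ⟨hne, Or.inl h⟩

lemma IsLeastInComponent.isMin {m : α} (hm : IsLeastInComponent m) : IsMin m :=
  fun _ hb => hm _ (reachable_of_le hb).symm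

lemma IsLeastInComponent.eq_of_reachable {a b : α} (ha : IsLeastInComponent a)
    (hb : IsLeastInComponent b) (h : (compGraph α).Reachable a b) : a = b :=
  le_antisymm (ha b h) (hb a h.symm)

def HasLeastInComponents (α : Type*) [PartialOrder α] : Prop :=
  ∀ c : (compGraph α).ConnectedComponent, ∃ m ∈ c.supp, ∀ y ∈ c.supp, m ≤ y

lemma exists_isLeastInComponent_reachable (hmin : HasLeastInComponents α) (z : α) :
    ∃ m, IsLeastInComponent m ∧ (compGraph α).Reachable m z := by
  obtain ⟨m, hm, hle⟩ := hmin ((compGraph α).connectedComponentMk z)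
  rw [SimpleGraph.ConnectedComponent.mem_supp_iff, SimpleGraph.ConnectedComponent.eq] at hm
  refine ⟨m, fun q hq => hle q ?_, hm⟩
  rw [SimpleGraph.ConnectedComponent.mem_supp_iff, SimpleGraph.ConnectedComponent.eq]
  exact hq.symm.trans hm

def componentMin (hmin : HasLeastInComponents α) (z : α) : α :=
  (exists_isLeastInComponent_reachable hmin z).choose

lemma isLeastInComponent_componentMin (hmin : HasLeastInComponents α) (z : α) :
    IsLeastInComponent (componentMin hmin z) :=
  (exists_isLeastInComponent_reachable hmin z).choose_spec.1

lemma reachable_componentMin (hmin : HasLeastInComponents α) (z : α) :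
    (compGraph α).Reachable (componentMin hmin z) z :=
  (exists_isLeastInComponent_reachable hmin z).choose_spec.2

lemma isLeastInComponent_of_isMin (hmin : HasLeastInComponents α) {w : α} (hw : IsMin w) :
    IsLeastInComponent w := by
  have hle := isLeastInComponent_componentMin hmin w _ (reachable_componentMin hmin w)
  exact hw.eq_of_le hle ▸ isLeastInComponent_componentMin hmin w

lemma card_isLeastInComponent (hmin : HasLeastInComponents α) :
    Nat.card {m : α // IsLeastInComponent m} = Nat.card (compGraph α).ConnectedComponent := by
  refine Nat.card_eq_of_bijective (fun m => (compGraph α).connectedComponentMk m.1) ⟨?_, ?_⟩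
  · intro a b hab
    exact Subtype.ext (a.2.eq_of_reachable b.2 (SimpleGraph.ConnectedComponent.exact hab))
  · intro c
    induction c using SimpleGraph.ConnectedComponent.ind with
    | h z => exact ⟨⟨_, isLeastInComponent_componentMin hmin z⟩,
        SimpleGraph.ConnectedComponent.sound (reachable_componentMin hmin z)⟩

end Components

section PromotionChain

variable (L : Labeling P)

lemma apply_lSucc_le (v : P) (h : (Finset.univ.filter fun y => v < y).Nonempty) {q : P}
    (hq : v < q) :
    L (lSucc L v h) ≤ L q := by
  rw [lSucc, Equiv.apply_symm_apply]
  exact Finset.min'_le _ _ (Finset.mem_image_of_mem L (by simpa using hq))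

lemma promChainFrom_eq (v : P) : promChainFrom L v =
    if h : (Finset.univ.filter fun y => v < y).Nonempty then
      v :: promChainFrom L (lSucc L v h)
    else [v] := by
  rw [promChainFrom]

lemma promChainFrom_head? (v : P) : (promChainFrom L v).head? = some v := by
  rw [promChainFrom_eq]; split <;> rfl

lemma promChainFrom_ne_nil (v : P) : promChainFrom L v ≠ [] := by
  rw [promChainFrom_eq]; split <;> simp

lemma isChain_promChainFrom (v : P) :
    (promChainFrom L v).IsChain (fun a b => ∃ h, b = lSucc L a h) := by
  induction v using promChainFrom.induct (L := L) with
  | case1 v h ih =>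
    rw [promChainFrom_eq, dif_pos h]
    refine List.isChain_cons.mpr ⟨fun b hb => ⟨h, ?_⟩, ih⟩
    rw [promChainFrom_head?] at hb
    exact (Option.some_injective _ hb).symm
  | case2 v h =>
    rw [promChainFrom_eq, dif_neg h]
    exact List.isChain_singleton v

lemma isChain_lt_promChainFrom (v : P) : (promChainFrom L v).IsChain (· < ·) :=
  (isChain_promChainFrom L v).imp fun a _ ⟨h, hb⟩ => hb ▸ lt_lSucc L a h

lemma nodup_promChainFrom (v : P) : (promChainFrom L v).Nodup :=
  (isChain_lt_promChainFrom L v).pairwise.imp ne_of_lt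

lemma isMax_getLast_promChainFrom (v : P) :
    IsMax ((promChainFrom L v).getLast (promChainFrom_ne_nil L v)) := by
  induction v using promChainFrom.induct (L := L) with
  | case1 v h ih =>
    simpa only [promChainFrom_eq L v, dif_pos h, List.getLast_cons (promChainFrom_ne_nil L _)]
      using ih
  | case2 v h =>
    simp only [promChainFrom_eq L v, dif_neg h, List.getLast_singleton]
    exact isMax_iff_forall_not_lt.mpr fun q hq => h ⟨q, by simpa using hq⟩

lemma formPerm_promChainFrom_getLast (v : P) :
    (promChainFrom L v).formPerm ((promChainFrom L v).getLast (promChainFrom_ne_nil L v)) = v := by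
  obtain ⟨l, hl⟩ := List.head?_eq_some_iff.mp (promChainFrom_head? L v)
  simp only [hl, List.formPerm_apply_getLast]

lemma formPerm_promChainFrom_of_ne_getLast {v x : P} (hx : x ∈ promChainFrom L v)
    (hlast : x ≠ (promChainFrom L v).getLast (promChainFrom_ne_nil L v)) :
    ∃ h, (promChainFrom L v).formPerm x = lSucc L x h := by
  obtain ⟨i, hi, rfl⟩ := List.getElem_of_mem hx
  have hi1 : i + 1 < (promChainFrom L v).length := by
    by_contra! hge
    exact hlast (by simp only [List.getLast_eq_getElem]; congr 1; omega)
  rw [List.formPerm_apply_lt_getElem _ (nodup_promChainFrom L v) i hi1]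
  exact (isChain_promChainFrom L v).getElem i hi1

end PromotionChain

lemma finRotate_of_add_one_lt {n : ℕ} (j : Fin n) (hj : (j : ℕ) + 1 < n) :
    finRotate n j = ⟨j + 1, hj⟩ := by
  obtain ⟨m, rfl⟩ : ∃ m, n = m + 1 := ⟨n - 1, by omega⟩
  exact finRotate_of_lt (n := m) (k := j) (by omega)

lemma finRotate_sub_one {n : ℕ} (hn : 0 < n) :
    finRotate n ⟨n - 1, by omega⟩ = ⟨0, hn⟩ := by
  obtain ⟨m, rfl⟩ : ∃ m, n = m + 1 := ⟨n - 1, by omega⟩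
  exact finRotate_last'

section Promotion

variable (L : Labeling P)

lemma promote_symm_apply [Nonempty P] (j : Fin (Fintype.card P)) :
    (promote L).symm j = (promChainFrom L (L.symm ⟨0, Fintype.card_pos⟩)).formPerm.symm
      (L.symm (finRotate _ j)) := by
  unfold promote
  rw [dif_pos ‹_›]
  rfl

lemma promote_symm_eq_or (j : Fin (Fintype.card P)) (hj : (j : ℕ) + 1 < Fintype.card P) :
    (promote L).symm j = L.symm ⟨j + 1, hj⟩ ∨
      ((promote L).symm j < L.symm ⟨j + 1, hj⟩ ∧
        ∀ q, (promote L).symm j < q → (j : ℕ) + 1 ≤ L q) := by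
  have : Nonempty P := Fintype.card_pos_iff.mp (by omega)
  set c := promChainFrom L (L.symm ⟨0, Fintype.card_pos⟩)
  set p := (promote L).symm j with hp_def
  have hp : c.formPerm p = L.symm ⟨j + 1, hj⟩ := by
    rw [hp_def, promote_symm_apply, Equiv.apply_symm_apply, finRotate_of_add_one_lt j hj]
  by_cases hpc : p ∈ c
  · have hlast : p ≠ c.getLast (promChainFrom_ne_nil L _) := by
      intro h
      rw [h, formPerm_promChainFrom_getLast] at hp
      simpa using congrArg Fin.val (L.symm.injective hp)
    obtain ⟨h, hs⟩ := formPerm_promChainFrom_of_ne_getLast L hpc hlast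
    rw [hs] at hp
    refine Or.inr ⟨hp ▸ lt_lSucc L p h, fun q hq => ?_⟩
    simpa [hp, Fin.le_def] using apply_lSucc_le L p h hq
  · exact Or.inl (by rwa [List.formPerm_apply_of_notMem hpc] at hp)

lemma promote_symm_le (j : Fin (Fintype.card P)) (hj : (j : ℕ) + 1 < Fintype.card P) :
    (promote L).symm j ≤ L.symm ⟨j + 1, hj⟩ := by
  rcases promote_symm_eq_or L j hj with h | h
  exacts [h.le, h.1.le]

lemma promote_symm_eq_of_lt (j : Fin (Fintype.card P)) (hj : (j : ℕ) + 1 < Fintype.card P)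
    (hlt : (promote L).symm j < L.symm j) :
    (promote L).symm j = L.symm ⟨j + 1, hj⟩ := by
  refine (promote_symm_eq_or L j hj).resolve_right fun ⟨_, habove⟩ => ?_
  simpa using habove _ hlt

lemma isMax_promote_symm_last (hn : 0 < Fintype.card P) :
    IsMax ((promote L).symm ⟨Fintype.card P - 1, by omega⟩) := by
  have : Nonempty P := Fintype.card_pos_iff.mp hn
  have h : (promote L).symm ⟨Fintype.card P - 1, by omega⟩ =
      (promChainFrom L (L.symm ⟨0, hn⟩)).getLast (promChainFrom_ne_nil L _) := by
    rw [promote_symm_apply, Equiv.symm_apply_eq, formPerm_promChainFrom_getLast,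
      finRotate_sub_one hn]
  rw [h]
  exact isMax_getLast_promChainFrom L _

end Promotion

-- `UpperSuperlevels L (n - a)` says that the top `a` labels of `L` are frozen (cf. `frozenA`).
def UpperSuperlevels (L : Labeling P) (k : ℕ) : Prop :=
  ∀ j, k ≤ j → IsUpperSet {x : P | j ≤ (L x : ℕ)}

section Superlevels

variable {L M : Labeling P}

lemma UpperSuperlevels.mono {k k' : ℕ} (h : UpperSuperlevels L k) (hk : k ≤ k') :
    UpperSuperlevels L k' :=
  fun j hj => h j (hk.trans hj)

lemma upperSuperlevels_card (L : Labeling P) : UpperSuperlevels L (Fintype.card P) := by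
  intro j hj x _ _ hx
  have := (L x).isLt
  simp only [Set.mem_ofPred_eq] at hx
  omega

lemma upperSuperlevels_promote {k : ℕ} (h : UpperSuperlevels L (k + 1)) :
    UpperSuperlevels (promote L) k := by
  intro j hj x y hxy hx
  simp only [Set.mem_ofPred_eq] at hx ⊢
  rcases hxy.eq_or_lt with rfl | hxy
  · exact hx
  by_contra! hy
  set a := promote L x
  have hxa : (promote L).symm a = x := by simp [a]
  have ha : (a : ℕ) + 1 < Fintype.card P := by
    by_contra! ha
    have hx' : x = (promote L).symm ⟨Fintype.card P - 1, by omega⟩ := by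
      rw [Equiv.eq_symm_apply]; ext; dsimp only; have := a.isLt; omega
    exact (isMax_promote_symm_last L (by omega)).not_lt (hx' ▸ hxy)
  have habove : ∀ q, x < q → (a : ℕ) + 1 ≤ L q := by
    rcases promote_symm_eq_or L a ha with hsymm | ⟨-, habove⟩
    · rw [hxa] at hsymm
      intro q hq
      refine h (a + 1) (by omega) hq.le ?_
      show (a : ℕ) + 1 ≤ L x
      rw [hsymm, Equiv.apply_symm_apply]
    · rwa [hxa] at habove
  set b := promote L y
  have hb : (b : ℕ) + 1 < Fintype.card P := by omega
  have hyb : y ≤ L.symm ⟨b + 1, hb⟩ := by simpa [b] using promote_symm_le L b hb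
  have := habove _ (hxy.trans_le hyb)
  simp only [Equiv.apply_symm_apply] at this
  omega

lemma upperSuperlevels_iterate_promote (L : Labeling P) (t : ℕ) :
    UpperSuperlevels (promote^[t] L) (Fintype.card P - t) := by
  induction t with
  | zero => exact upperSuperlevels_card L
  | succ t ih =>
    rw [Function.iterate_succ_apply']
    exact upperSuperlevels_promote (ih.mono (by omega))

lemma UpperSuperlevels.val_eq_of_lt (hM : UpperSuperlevels M 2) {x y : P} (hxy : x ≤ y)
    (hlt : M y < M x) : (M x : ℕ) = 1 ∧ (M y : ℕ) = 0 := by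
  have hlt' : (M y : ℕ) < M x := hlt
  have : (M x : ℕ) < 2 := by
    by_contra! h2
    have : (M x : ℕ) ≤ M y := hM _ h2 hxy (le_refl (M x : ℕ))
    omega
  omega

lemma UpperSuperlevels.symm_one_lt_symm_zero (hM : UpperSuperlevels M 2)
    (hn : 2 ≤ Fintype.card P) (hM' : ¬ IsLinearExt M) :
    M.symm ⟨1, by omega⟩ < M.symm ⟨0, by omega⟩ := by
  simp only [IsLinearExt, not_forall, not_le] at hM'
  obtain ⟨x, y, hxy, hlt⟩ := hM'
  obtain ⟨hx, hy⟩ := hM.val_eq_of_lt hxy hlt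
  have hx' : M.symm ⟨1, by omega⟩ = x := by rw [Equiv.symm_apply_eq]; ext; exact hx.symm
  have hy' : M.symm ⟨0, by omega⟩ = y := by rw [Equiv.symm_apply_eq]; ext; exact hy.symm
  rw [hx', hy']
  exact hxy.lt_of_ne (by rintro rfl; exact lt_irrefl _ hlt)

lemma UpperSuperlevels.isMin_symm_one (hM : UpperSuperlevels M 2) (hn : 2 ≤ Fintype.card P)
    (hlt : M.symm ⟨1, by omega⟩ < M.symm ⟨0, by omega⟩) :
    IsMin (M.symm ⟨1, by omega⟩) := by
  refine isMin_iff_forall_not_lt.mpr fun y hy => ?_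
  have hw : (M (M.symm ⟨1, by omega⟩) : ℕ) = 1 := by simp
  have hy0 : (M y : ℕ) = 0 := by
    rcases lt_or_ge (M (M.symm ⟨1, by omega⟩)) (M y) with h | h
    · have := (hM.val_eq_of_lt hy.le h).2; omega
    · have : M y ≠ M (M.symm ⟨1, by omega⟩) := M.injective.ne hy.ne
      have : (M y : ℕ) ≠ 1 := by rw [← hw]; exact fun h' => this (Fin.ext h')
      rw [Fin.le_def] at h
      omega
  have : y = M.symm ⟨0, by omega⟩ := by rw [Equiv.eq_symm_apply]; ext; exact hy0
  exact lt_asymm hlt (this ▸ hy)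

end Superlevels

section Iterates

variable (L : Labeling P)

lemma iterate_promote_symm_le (t : ℕ) {j k : ℕ} (hk : k < Fintype.card P) (hjk : j + t = k) :
    (promote^[t] L).symm ⟨j, by omega⟩ ≤ L.symm ⟨k, hk⟩ := by
  induction t generalizing L k with
  | zero => subst hjk; rfl
  | succ t ih =>
    obtain ⟨k, rfl⟩ : ∃ k', k = k' + 1 := ⟨k - 1, by omega⟩
    rw [Function.iterate_succ_apply]
    exact (ih (promote L) (by omega) (by omega)).trans (promote_symm_le L ⟨k, by omega⟩ hk)

lemma iterate_promote_symm_eq_of_lt (t : ℕ) {j k : ℕ} (hk : k < Fintype.card P)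
    (hjk : j + 1 + t = k)
    (hlt : (promote^[t] L).symm ⟨j + 1, by omega⟩ < (promote^[t] L).symm ⟨j, by omega⟩) :
    (promote^[t] L).symm ⟨j + 1, by omega⟩ = L.symm ⟨k, hk⟩ := by
  induction t generalizing L k with
  | zero => subst hjk; rfl
  | succ t ih =>
    obtain ⟨k, rfl⟩ : ∃ k', k = k' + 1 := ⟨k - 1, by omega⟩
    have hle := iterate_promote_symm_le L (t + 1) (j := j) (k := k) (by omega) (by omega)
    rw [Function.iterate_succ_apply] at hlt hle ⊢
    have hw := ih (promote L) (k := k) (by omega) (by omega) hlt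
    rw [hw] at hlt ⊢
    exact promote_symm_eq_of_lt L ⟨k, by omega⟩ hk (hlt.trans_le hle)

lemma iterate_promote_symm_eq_of_isMin (t : ℕ) {j k : ℕ} (hk : k < Fintype.card P)
    (hjk : j + t = k) (hmin : IsMin (L.symm ⟨k, hk⟩)) :
    (promote^[t] L).symm ⟨j, by omega⟩ = L.symm ⟨k, hk⟩ := by
  induction t generalizing L k with
  | zero => subst hjk; rfl
  | succ t ih =>
    obtain ⟨k, rfl⟩ : ∃ k', k = k' + 1 := ⟨k - 1, by omega⟩
    have hstep : (promote L).symm ⟨k, by omega⟩ = L.symm ⟨k + 1, hk⟩ :=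
      hmin.eq_of_le (promote_symm_le L ⟨k, by omega⟩ hk)
    rw [Function.iterate_succ_apply, ← hstep]
    exact ih (promote L) (by omega) (by omega) (hstep ▸ hmin)

end Iterates

section Tangled

variable (hn : 2 ≤ Fintype.card P)

theorem isTangled_iff (hmin : HasLeastInComponents P) (L : Labeling P) :
    IsTangled L ↔ IsLeastInComponent (L.symm ⟨Fintype.card P - 1, by omega⟩) ∧
      L.symm ⟨Fintype.card P - 1, by omega⟩ < L.symm ⟨Fintype.card P - 2, by omega⟩ := by
  set M := promote^[Fintype.card P - 2] L
  have hu : M.symm ⟨0, by omega⟩ ≤ L.symm ⟨Fintype.card P - 2, by omega⟩ :=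
    iterate_promote_symm_le L _ _ (zero_add _)
  constructor
  · rintro ⟨-, hM⟩
    have hup : UpperSuperlevels M 2 := (upperSuperlevels_iterate_promote L _).mono (by omega)
    have hwu := hup.symm_one_lt_symm_zero hn hM
    have hw : M.symm ⟨1, by omega⟩ = L.symm ⟨Fintype.card P - 1, by omega⟩ :=
      iterate_promote_symm_eq_of_lt L _ _ (by omega) hwu
    rw [← hw]
    exact ⟨isLeastInComponent_of_isMin hmin (hup.isMin_symm_one hn hwu), hwu.trans_le hu⟩
  · rintro ⟨hm, hmz⟩
    have hw : M.symm ⟨1, by omega⟩ = L.symm ⟨Fintype.card P - 1, by omega⟩ :=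
      iterate_promote_symm_eq_of_isMin L _ _ (by omega) hm.isMin
    have hmu : L.symm ⟨Fintype.card P - 1, by omega⟩ ≤ M.symm ⟨0, by omega⟩ :=
      hm _ ((reachable_of_le hmz.le).trans (reachable_of_le hu).symm)
    refine ⟨hn, fun hlin => ?_⟩
    have := hlin _ _ hmu
    rw [← hw, Equiv.apply_symm_apply, Equiv.apply_symm_apply, Fin.mk_le_mk] at this
    omega

theorem isTangled_iff_componentMin (hmin : HasLeastInComponents P) (L : Labeling P) :
    IsTangled L ↔ ¬ IsLeastInComponent (L.symm ⟨Fintype.card P - 2, by omega⟩) ∧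
      L (componentMin hmin (L.symm ⟨Fintype.card P - 2, by omega⟩)) =
        ⟨Fintype.card P - 1, by omega⟩ := by
  rw [isTangled_iff hn hmin]
  set z := L.symm ⟨Fintype.card P - 2, by omega⟩
  have hleast := isLeastInComponent_componentMin hmin z
  constructor
  · rintro ⟨hm, hmz⟩
    refine ⟨fun hz => hmz.not_ge (hz _ (reachable_of_le hmz.le).symm), ?_⟩
    rw [hleast.eq_of_reachable hm
      ((reachable_componentMin hmin z).trans (reachable_of_le hmz.le).symm),
      Equiv.apply_symm_apply]
  · rintro ⟨hz, hL⟩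
    rw [← hL, Equiv.symm_apply_apply]
    refine ⟨hleast, (hleast _ (reachable_componentMin hmin z)).lt_of_ne ?_⟩
    rintro h
    exact hz (h ▸ hleast)

end Tangled

/-- If `P` has `n ≥ 2` elements and each of its `r` connected
components has a unique minimal element, then the number of tangled labelings of
`P` is `(n − r) · (n − 2)!`. -/
theorem card_tangled_unique_minimal (hn : 2 ≤ Fintype.card P)
    (hmin : ∀ c : (compGraph P).ConnectedComponent,
      ∃ m ∈ c.supp, ∀ y ∈ c.supp, m ≤ y) :
    Nat.card {L : Labeling P // IsTangled L} =
      (Fintype.card P - Nat.card (compGraph P).ConnectedComponent) *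
        Nat.factorial (Fintype.card P - 2) := by
  have htop : (⟨Fintype.card P - 2, by omega⟩ : Fin (Fintype.card P)) ≠
      ⟨Fintype.card P - 1, by omega⟩ := by
    rw [ne_eq, Fin.mk.injEq]; omega
  rw [Nat.card_congr (Equiv.subtypeEquivRight (isTangled_iff_componentMin hn hmin)),
    card_equiv_symm_pred_and_apply_eq (by simp) htop (fun z => ¬ IsLeastInComponent z)
      (componentMin hmin) fun z hz h => hz (h ▸ isLeastInComponent_componentMin hmin z),
    ← card_isLeastInComponent hmin, Nat.card_eq_fintype_card, Nat.card_eq_fintype_card,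
    Fintype.card_subtype_compl]

end
end
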